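/- arXiv:2506.23384 — 6 statements merged into one kernel-verified Lean document; each statement's English description precedes it below -/
import Mathlib

section
/- Let M be a nondeterministic finite automaton over an alphabet α with a finite state type σ. If the language L(M) accepted by M is a finite set and L(M) contains a word w of length n, then σ has at least n + 1 elements (i.e., Fintype.card σ ≥ n + 1). -/
/-!
An accepting path reading a word of length at least `|σ|` visits `|σ| + 1` states, so by
pigeonhole some state `q` occurs twice. Writing the word as `a ++ b ++ c` with `b ≠ []` read
along the loop at `q`, every word `a ++ bᵏ ++ c` is accepted, and these are pairwise distinct.
-/

theorem List.injective_append_flatten_replicate_append {α : Type*} {a b c : List α}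
    (hb : b ≠ []) :
    Function.Injective fun k : ℕ => a ++ (List.replicate k b).flatten ++ c := by
  intro k₁ k₂ h
  have hlen := congrArg List.length h
  simp only [List.length_append, List.length_flatten, List.map_replicate, List.sum_replicate,
    smul_eq_mul] at hlen
  exact Nat.eq_of_mul_eq_mul_right (List.length_pos_iff.mpr hb) (by omega)

namespace NFA

variable {α σ : Type*} {M : NFA α σ}

theorem mem_evalFrom_append_of_mem {s q t : σ} {x y : List α}
    (hx : q ∈ M.evalFrom {s} x) (hy : t ∈ M.evalFrom {q} y) :
    t ∈ M.evalFrom {s} (x ++ y) := by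
  rw [evalFrom_append, mem_evalFrom_iff_exists]
  exact ⟨q, hx, hy⟩

theorem mem_evalFrom_flatten_replicate {q : σ} {y : List α} (hy : q ∈ M.evalFrom {q} y)
    (k : ℕ) : q ∈ M.evalFrom {q} (List.replicate k y).flatten := by
  induction k with
  | zero => simp
  | succ k ih =>
    rw [List.replicate_succ, List.flatten_cons]
    exact mem_evalFrom_append_of_mem hy ih

theorem Path.exists_split_of_mem_supp [DecidableEq σ] {s t q : σ} {x : List α}
    (p : M.Path s t x) (hq : q ∈ p.supp) :
    ∃ a c, x = a ++ c ∧ q ∈ M.evalFrom {s} a ∧ t ∈ M.evalFrom {q} c := by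
  induction p with
  | nil s =>
    obtain rfl : q = s := by simpa using hq
    exact ⟨[], [], rfl, by simp, by simp⟩
  | cons s' s t a x hs' p ih =>
    rcases Finset.mem_union.mp hq with hqs | hqp
    · obtain rfl : q = s := Finset.mem_singleton.mp hqs
      exact ⟨[], a :: x, rfl, by simp,
        mem_evalFrom_iff_nonempty_path.mpr ⟨Path.cons s' q t a x hs' p⟩⟩
    · obtain ⟨b, c, rfl, hb, hc⟩ := ih hqp
      refine ⟨a :: b, c, rfl, ?_, hc⟩
      exact mem_evalFrom_append_of_mem (x := [a]) (by simpa using hs') hb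

theorem Path.exists_loop_of_card_supp_lt [DecidableEq σ] {s t : σ} {x : List α}
    (p : M.Path s t x) (hcard : p.supp.card < x.length + 1) :
    ∃ q a b c, x = a ++ b ++ c ∧ b ≠ [] ∧ q ∈ M.evalFrom {s} a ∧
      q ∈ M.evalFrom {q} b ∧ t ∈ M.evalFrom {q} c := by
  induction p with
  | nil s => simp at hcard
  | cons s' s t a x hs' p ih =>
    by_cases hs : s ∈ p.supp
    · obtain ⟨b, c, rfl, hb, hc⟩ := p.exists_split_of_mem_supp hs
      refine ⟨s, [], a :: b, c, rfl, List.cons_ne_nil a b, by simp, ?_, hc⟩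
      exact mem_evalFrom_append_of_mem (x := [a]) (by simpa using hs') hb
    · have hcard' : p.supp.card < x.length + 1 := by
        simp only [supp, Finset.singleton_union, Finset.card_insert_of_notMem hs,
          List.length_cons] at hcard
        omega
      obtain ⟨q, b₁, b₂, c, rfl, hb₂, hb₁, hloop, hc⟩ := ih hcard'
      exact ⟨q, a :: b₁, b₂, c, rfl, hb₂,
        mem_evalFrom_append_of_mem (x := [a]) (by simpa using hs') hb₁, hloop, hc⟩

theorem length_lt_card_of_mem_accepts [Fintype σ] (hfin : M.accepts.Finite) {x : List α}
    (hx : x ∈ M.accepts) : x.length < Fintype.card σ := by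
  classical
  by_contra! hlen
  obtain ⟨s, hs, t, ht, ⟨p⟩⟩ := accepts_iff_exists_path.mp hx
  have hcard : p.supp.card < x.length + 1 := (p.supp.card_le_univ).trans_lt (by omega)
  obtain ⟨q, a, b, c, -, hb, ha, hloop, hc⟩ := p.exists_loop_of_card_supp_lt hcard
  have hpumped : ∀ k, a ++ (List.replicate k b).flatten ++ c ∈ M.accepts := fun k =>
    mem_accepts.mpr ⟨t, ht, mem_evalFrom_iff_exists.mpr ⟨s, hs,
      mem_evalFrom_append_of_mem (mem_evalFrom_append_of_mem ha
        (mem_evalFrom_flatten_replicate hloop k)) hc⟩⟩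
  exact Set.infinite_of_injective_forall_mem
    (List.injective_append_flatten_replicate_append hb) hpumped hfin

end NFA

/-- If an NFA with a finite state type accepts a finite language and accepts a word of
length `n`, then it has at least `n + 1` states. -/
theorem nfa_finite_language_state_lower_bound
    {α : Type*} {σ : Type*} [Fintype σ] (M : NFA α σ)
    (hfin : Set.Finite (M.accepts : Set (List α)))
    (w : List α) (n : ℕ) (hw : w ∈ M.accepts) (hn : w.length = n) :
    n + 1 ≤ Fintype.card σ :=
  hn ▸ NFA.length_lt_card_of_mem_accepts hfin hw
end

section
/- Let M be a nondeterministic finite automaton over an alphabet α with a finite state type σ, where α is also a finite type. If the language L(M) accepted by M is a finite set and L(M) contains a word w of length n, then M has at least n transitions, i.e., the set {(q, a, q') : q' ∈ M.step q a} has cardinality at least n. -/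
/-!
Write an accepting run on `w` as the list of the `n` transitions it takes. If some transition
occurred twice, the stretch of the run from its first occurrence up to its second would be a
nonempty loop, and pumping it would make `M` accept infinitely many words. So when `L(M)` is
finite the `n` transitions of the run are pairwise distinct.
-/

theorem List.exists_eq_append_cons_append_cons_of_not_nodup {X : Type*} {l : List X}
    (hl : ¬ l.Nodup) : ∃ x l₁ l₂ l₃, l = l₁ ++ x :: l₂ ++ x :: l₃ := by
  obtain ⟨x, hx⟩ := List.exists_duplicate_iff_not_nodup.2 hl
  obtain ⟨r₁, r₂, rfl, hr₁, hr₂⟩ := List.cons_sublist_iff.1 (List.duplicate_iff_sublist.1 hx)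
  obtain ⟨l₁, l₂, rfl⟩ := List.append_of_mem hr₁
  obtain ⟨l₃, l₄, rfl⟩ := List.append_of_mem (List.singleton_sublist.1 hr₂)
  exact ⟨x, l₁, l₂ ++ l₃, l₄, by simp⟩

theorem Language.infinite_of_forall_append_flatten_replicate_append_mem {α : Type*}
    {L : Language α} {u v x : List α} (hv : v ≠ [])
    (h : ∀ k, u ++ (List.replicate k v).flatten ++ x ∈ L) : (L : Set (List α)).Infinite := by
  refine Set.infinite_of_injective_forall_mem (fun k₁ k₂ hk => ?_) h
  have hlen := congrArg List.length hk
  simp only [List.length_append, List.length_flatten, List.map_replicate, List.sum_replicate,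
    smul_eq_mul] at hlen
  exact Nat.eq_of_mul_eq_mul_right (List.length_pos_iff.2 hv) (by omega)

namespace NFA

variable {α σ : Type*} (M : NFA α σ)

def transitions : Set (σ × α × σ) := {t | t.2.2 ∈ M.step t.1 t.2.1}

def IsPath : σ → List (σ × α × σ) → σ → Prop
  | p, [], q => p = q
  | p, t :: l, q => t.1 = p ∧ t ∈ M.transitions ∧ IsPath t.2.2 l q

variable {M}

theorem isPath_append {p q : σ} {l₁ l₂ : List (σ × α × σ)} :
    M.IsPath p (l₁ ++ l₂) q ↔ ∃ r, M.IsPath p l₁ r ∧ M.IsPath r l₂ q := by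
  induction l₁ generalizing p with
  | nil => simp [IsPath]
  | cons t l ih => simp only [List.cons_append, IsPath, ih]; grind

theorem IsPath.mem_transitions {p q : σ} {l : List (σ × α × σ)} (h : M.IsPath p l q) :
    ∀ t ∈ l, t ∈ M.transitions := by
  induction l generalizing p with
  | nil => simp
  | cons s l ih =>
    obtain ⟨-, hs, hl⟩ := h
    simpa [hs] using ih hl

theorem IsPath.flatten_replicate {r : σ} {l : List (σ × α × σ)} (h : M.IsPath r l r) (k : ℕ) :
    M.IsPath r (List.replicate k l).flatten r := by
  induction k with
  | zero => rfl
  | succ k ih => exact isPath_append.2 ⟨r, h, ih⟩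

theorem mem_evalFrom_iff_exists_isPath {S : Set σ} {w : List α} {q : σ} :
    q ∈ M.evalFrom S w ↔ ∃ p ∈ S, ∃ l, M.IsPath p l q ∧ l.map (·.2.1) = w := by
  induction w generalizing S with
  | nil => simp [IsPath]
  | cons a w ih =>
    rw [evalFrom_cons, ih]
    constructor
    · rintro ⟨p', hp', l, hl, rfl⟩
      obtain ⟨p, hp, hstep⟩ := M.mem_stepSet.1 hp'
      exact ⟨p, hp, (p, a, p') :: l, ⟨rfl, hstep, hl⟩, rfl⟩
    · rintro ⟨p, hp, _ | ⟨t, l⟩, hl, hw⟩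
      · simp at hw
      · obtain ⟨rfl, ht, hl⟩ := hl
        obtain ⟨rfl, rfl⟩ := List.cons_eq_cons.1 hw
        exact ⟨t.2.2, M.mem_stepSet.2 ⟨t.1, hp, ht⟩, l, hl, rfl⟩

theorem mem_accepts_iff_exists_isPath {w : List α} :
    w ∈ M.accepts ↔
      ∃ p ∈ M.start, ∃ q ∈ M.accept, ∃ l, M.IsPath p l q ∧ l.map (·.2.1) = w := by
  simp only [mem_accepts, mem_evalFrom_iff_exists_isPath]
  grind

theorem infinite_accepts_of_isPath_of_not_nodup {p q : σ} {l : List (σ × α × σ)}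
    (hp : p ∈ M.start) (hq : q ∈ M.accept) (h : M.IsPath p l q) (hl : ¬ l.Nodup) :
    (M.accepts : Set (List α)).Infinite := by
  obtain ⟨t, l₁, l₂, l₃, rfl⟩ := List.exists_eq_append_cons_append_cons_of_not_nodup hl
  obtain ⟨r, h₁, h₂₃⟩ := isPath_append.1 h
  obtain ⟨r', h₂, h₃⟩ := isPath_append.1 h₁
  have hr' : t.1 = r' := h₃.1
  have hr : t.1 = r := h₂₃.1
  subst hr hr'
  refine Language.infinite_of_forall_append_flatten_replicate_append_mem
    (u := l₁.map (·.2.1)) (v := (t :: l₂).map (·.2.1)) (x := (t :: l₃).map (·.2.1))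
    (List.cons_ne_nil _ _) fun k => ?_
  refine mem_accepts_iff_exists_isPath.2
    ⟨p, hp, q, hq, l₁ ++ (List.replicate k (t :: l₂)).flatten ++ t :: l₃, ?_, by simp⟩
  exact isPath_append.2 ⟨t.1, isPath_append.2 ⟨t.1, h₂, h₃.flatten_replicate k⟩, h₂₃⟩

theorem IsPath.length_le_ncard_transitions [Finite α] [Finite σ] {p q : σ}
    {l : List (σ × α × σ)} (h : M.IsPath p l q) (hl : l.Nodup) :
    l.length ≤ M.transitions.ncard := by
  classical
  calc l.length = (l.toFinset : Set (σ × α × σ)).ncard := by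
        rw [Set.ncard_coe_finset, List.toFinset_card_of_nodup hl]
    _ ≤ M.transitions.ncard :=
        Set.ncard_le_ncard (fun t ht => h.mem_transitions t (by simpa using ht))

end NFA

/-- If an NFA with finite state type (over a finite alphabet) accepts a finite language
and accepts a word of length `n`, then it has at least `n` transitions. -/
theorem nfa_finite_language_transition_lower_bound
    {α : Type*} [Fintype α] {σ : Type*} [Fintype σ] (M : NFA α σ)
    (hfin : Set.Finite (M.accepts : Set (List α)))
    (w : List α) (n : ℕ) (hw : w ∈ M.accepts) (hn : w.length = n) :
    n ≤ Set.ncard {t : σ × α × σ | t.2.2 ∈ M.step t.1 t.2.1} := by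
  obtain ⟨p, hp, q, hq, l, hl, rfl⟩ := M.mem_accepts_iff_exists_isPath.1 hw
  have hnodup : l.Nodup := by
    by_contra hdup
    exact M.infinite_accepts_of_isPath_of_not_nodup hp hq hl hdup hfin
  rw [← hn, List.length_map]
  exact hl.length_le_ncard_transitions hnodup
end

section
/- Fix k ≥ 1 and the two-letter alphabet {a, b}. Every nondeterministic finite automaton M with a finite state type whose accepted language is exactly the singleton {a·a·b^k·a·a} has at least k + 5 states and at least k + 4 transitions. -/
/-!
On an accepting run of the only accepted word `w`, no state occurs twice: cutting out the loop
between two visits would leave an accepting run on a shorter word. So the run passes through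
`w.length + 1` distinct states, and its `w.length` transitions are distinct because their
source states are.
-/

/-- The letter `a` of the two-letter alphabet `{a, b}`, modeled as `Bool`. -/
def la : Bool := true

/-- The letter `b` of the two-letter alphabet `{a, b}`, modeled as `Bool`. -/
def lb : Bool := false

/-- The word `a·a·b^k·a·a`. -/
def aabkaa (k : ℕ) : List Bool := [la, la] ++ List.replicate k lb ++ [la, la]

namespace NFA

variable {α σ : Type*} {M : NFA α σ} {w : List α} {f : ℕ → σ}

variable (M) in
/-- `f 0, f 1, …, f w.length` is a run of `M` on `w`; the other values of `f` are irrelevant. -/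
def IsRun (w : List α) (f : ℕ → σ) : Prop :=
  ∀ i (hi : i < w.length), f (i + 1) ∈ M.step (f i) w[i]

theorem IsRun.take (hf : M.IsRun w f) (n : ℕ) : M.IsRun (w.take n) f := fun i hi => by
  simpa using hf i (by simp only [List.length_take, lt_inf_iff] at hi; omega)

theorem IsRun.drop (hf : M.IsRun w f) (n : ℕ) : M.IsRun (w.drop n) (fun i => f (n + i)) :=
  fun i hi => by
    simpa [← add_assoc] using hf (n + i) (by simp only [List.length_drop] at hi; omega)

theorem IsRun.mem_evalFrom (hf : M.IsRun w f) : f w.length ∈ M.evalFrom {f 0} w := by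
  induction w generalizing f with
  | nil => simp
  | cons a w ih =>
    have htail : M.IsRun w (fun i => f (i + 1)) := fun i hi =>
      hf (i + 1) (by simp only [List.length_cons]; omega)
    rw [evalFrom_cons, stepSet_singleton, mem_evalFrom_iff_exists]
    exact ⟨f 1, hf 0 (by simp), ih htail⟩

theorem exists_isRun_of_mem_evalFrom {S : Set σ} {q : σ} (h : q ∈ M.evalFrom S w) :
    ∃ f, M.IsRun w f ∧ f 0 ∈ S ∧ f w.length = q := by
  induction w generalizing S with
  | nil => exact ⟨fun _ => q, fun i hi => absurd hi (by simp), h, rfl⟩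
  | cons a w ih =>
    rw [evalFrom_cons] at h
    obtain ⟨g, hg, hg0, hgq⟩ := ih h
    obtain ⟨p, hp, hpg⟩ := mem_stepSet.1 hg0
    refine ⟨fun | 0 => p | i + 1 => g i, ?_, hp, hgq⟩
    rintro (_ | i) hi
    · exact hpg
    · exact hg i (by simpa using hi)

theorem IsRun.mem_evalFrom_take_append_drop (hf : M.IsRun w f) {i j : ℕ} (hij : i ≤ j)
    (hj : j ≤ w.length) (hfij : f i = f j) :
    f w.length ∈ M.evalFrom {f 0} (w.take i ++ w.drop j) := by
  have hprefix : f i ∈ M.evalFrom {f 0} (w.take i) := by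
    simpa [List.length_take, min_eq_left (hij.trans hj)] using (hf.take i).mem_evalFrom
  have hsuffix : f w.length ∈ M.evalFrom {f j} (w.drop j) := by
    simpa [Nat.add_sub_cancel' hj] using (hf.drop j).mem_evalFrom
  rw [evalFrom_append, mem_evalFrom_iff_exists]
  exact ⟨f i, hprefix, hfij ▸ hsuffix⟩

theorem IsRun.injOn_of_accepts_eq_singleton (hL : M.accepts = {w})
    (hf : M.IsRun w f) (hstart : f 0 ∈ M.start) (haccept : f w.length ∈ M.accept) :
    Set.InjOn f (Set.Iic w.length) := by
  suffices ∀ i j, i < j → j ≤ w.length → f i ≠ f j by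
    intro i hi j hj hfij
    by_contra hne
    rcases Nat.lt_or_gt_of_ne hne with h | h
    · exact this i j h hj hfij
    · exact this j i h hi hfij.symm
  intro i j hij hj hfij
  have hcut : w.take i ++ w.drop j ∈ M.accepts := mem_accepts.2
    ⟨_, haccept, mem_evalFrom_iff_exists.2 ⟨f 0, hstart,
      hf.mem_evalFrom_take_append_drop hij.le hj hfij⟩⟩
  rw [hL] at hcut
  have hlen := congrArg List.length (show w.take i ++ w.drop j = w from hcut)
  simp only [List.length_append, List.length_take, List.length_drop] at hlen
  omega

theorem exists_isRun_injOn_of_accepts_eq_singleton (hL : M.accepts = {w}) :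
    ∃ f, M.IsRun w f ∧ Set.InjOn f (Set.Iic w.length) := by
  have hw : w ∈ M.accepts := by rw [hL]; rfl
  obtain ⟨q, hq, hqw⟩ := mem_accepts.1 hw
  obtain ⟨f, hf, hstart, hfq⟩ := exists_isRun_of_mem_evalFrom hqw
  exact ⟨f, hf, hf.injOn_of_accepts_eq_singleton hL hstart (hfq ▸ hq)⟩

theorem length_add_one_le_card_of_accepts_eq_singleton [Fintype σ]
    (hL : M.accepts = {w}) : w.length + 1 ≤ Fintype.card σ := by
  obtain ⟨f, -, hinj⟩ := exists_isRun_injOn_of_accepts_eq_singleton hL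
  simpa using Fintype.card_le_of_injective (fun i : Fin (w.length + 1) => f i)
    fun i j hij => Fin.ext (hinj i.is_le j.is_le hij)

theorem length_le_ncard_transitions_of_accepts_eq_singleton [Finite α] [Finite σ]
    (hL : M.accepts = {w}) :
    w.length ≤ {t : σ × α × σ | t.2.2 ∈ M.step t.1 t.2.1}.ncard := by
  obtain ⟨f, hf, hinj⟩ := exists_isRun_injOn_of_accepts_eq_singleton hL
  let edge (i : Fin w.length) : σ × α × σ := (f i, w[i], f (i + 1))
  have hedge : Function.Injective edge := fun i j hij =>
    Fin.ext (hinj i.isLt.le j.isLt.le (congrArg Prod.fst hij))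
  calc w.length = (Set.range edge).ncard := by
        rw [Set.ncard_range_of_injective hedge, Nat.card_eq_fintype_card, Fintype.card_fin]
    _ ≤ _ := Set.ncard_le_ncard (Set.range_subset_iff.2 fun i => hf i i.isLt) (Set.toFinite _)

end NFA

theorem length_aabkaa (k : ℕ) : (aabkaa k).length = k + 4 := by
  simp [aabkaa]

theorem nfa_singleton_aabkaa_lower_bounds_general
    (k : ℕ) (σ : Type*) [Fintype σ] (M : NFA Bool σ)
    (hL : (M.accepts : Set (List Bool)) = {aabkaa k}) :
    k + 5 ≤ Fintype.card σ ∧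
    k + 4 ≤ Set.ncard {t : σ × Bool × σ | t.2.2 ∈ M.step t.1 t.2.1} := by
  have hstates := NFA.length_add_one_le_card_of_accepts_eq_singleton hL
  have htransitions := NFA.length_le_ncard_transitions_of_accepts_eq_singleton hL
  rw [length_aabkaa] at hstates htransitions
  exact ⟨hstates, htransitions⟩

/-- Every NFA with finite state type accepting exactly `{a·a·b^k·a·a}` (for `k ≥ 1`)
has at least `k + 5` states and at least `k + 4` transitions. -/
theorem nfa_singleton_aabkaa_lower_bounds
    (k : ℕ) (hk : 1 ≤ k) (σ : Type*) [Fintype σ] (M : NFA Bool σ)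
    (hL : (M.accepts : Set (List Bool)) = {aabkaa k}) :
    k + 5 ≤ Fintype.card σ ∧
    k + 4 ≤ Set.ncard {t : σ × Bool × σ | t.2.2 ∈ M.step t.1 t.2.1} :=
  nfa_singleton_aabkaa_lower_bounds_general k σ M hL
end

section
/- Fix k ≥ 1 and the two-letter alphabet {a, b}, and let W = {a·a·b^k·a·a} and F = {a·b^k·a}. There exists a nondeterministic finite automaton M with 5 states such that W ⊆ L(M) and no word of L(M) \ W contains the word a·b^k·a as a factor, whereas every nondeterministic finite automaton N with L(N) = W has at least k + 5 states. (Hence, for these W and F, the smallest NFA accepting a superset of W whose extra words avoid all forbidden patterns of F is strictly smaller than the minimal NFA accepting W exactly.) -/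
/-- The forbidden pattern `a·b^k·a`. -/
def abka (k : ℕ) : List Bool := [la] ++ List.replicate k lb ++ [la]

namespace NFA

variable {α σ : Type*} (M : NFA α σ)

theorem mem_acceptsFrom_iff_exists {S : Set σ} {x : List α} :
    x ∈ M.acceptsFrom S ↔ ∃ s ∈ S, x ∈ M.acceptsFrom {s} := by
  simp only [mem_acceptsFrom, mem_evalFrom_iff_exists (S := S)]
  grind

@[simp]
theorem acceptsFrom_empty : M.acceptsFrom ∅ = 0 := by
  ext x
  rw [mem_acceptsFrom_iff_exists]
  simp

theorem length_lt_card_of_accepts_eq_singleton [Fintype σ] {w : List α}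
    (h : M.accepts = {w}) : w.length < Fintype.card σ := by
  have cut : ∀ i : Fin (w.length + 1), ∃ q ∈ M.evalFrom M.start (w.take i),
      w.drop i ∈ M.acceptsFrom {q} := fun i => by
    rw [← mem_acceptsFrom_iff_exists, ← append_mem_acceptsFrom, List.take_append_drop,
      ← accepts_eq_acceptsFrom_start, h]
    rfl
  choose q hq using cut
  suffices Function.Injective q by simpa using Fintype.card_le_of_injective q this
  intro i j hij
  have hmem : w.take i ++ w.drop j ∈ M.accepts :=
    (append_mem_acceptsFrom M).2 <|
      (mem_acceptsFrom_iff_exists M).2 ⟨q j, hij ▸ (hq i).1, (hq j).2⟩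
  rw [h] at hmem
  have hlen := congrArg List.length (Set.mem_singleton_iff.1 hmem)
  simp only [List.length_append, List.length_take, List.length_drop] at hlen
  omega

end NFA

namespace List

variable {α : Type*} {a b : α}

theorem eq_of_replicate_append_singleton_prefix (hab : a ≠ b) {k n : ℕ} {l : List α}
    (h : replicate k b ++ [a] <+: replicate n b ++ a :: l) : k = n := by
  induction k generalizing n with
  | zero => cases n <;> simp_all [replicate_succ]
  | succ k ih =>
    cases n with
    | zero => simp [replicate_succ, hab.symm] at h
    | succ n => simpa using ih (by simpa [replicate_succ] using h)

theorem not_infix_replicate_append (hab : a ≠ b) (n : ℕ) :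
    ¬ [a, b] <:+: replicate n b ++ [a, a] := by
  induction n with
  | zero => simp [infix_cons_iff, hab.symm]
  | succ n ih => simp [infix_cons_iff, replicate_succ, hab, ih]

end List

theorem eq_of_abka_infix_aabkaa {k n : ℕ} (hk : 1 ≤ k) (h : abka k <:+: aabkaa n) : k = n := by
  obtain ⟨j, rfl⟩ : ∃ j, k = j + 1 := ⟨k - 1, by omega⟩
  have hab : la ≠ lb := by decide
  have hw : aabkaa n = la :: la :: (List.replicate n lb ++ [la, la]) := by simp [aabkaa]
  rw [hw, List.infix_cons_iff, List.infix_cons_iff] at h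
  rcases h with h | h | h
  · simp [abka, List.replicate_succ, hab.symm] at h
  · exact List.eq_of_replicate_append_singleton_prefix hab (by simpa [abka] using h)
  · refine absurd (List.IsInfix.trans ?_ h) (List.not_infix_replicate_append hab n)
    exact List.IsPrefix.isInfix (by simp [abka, List.replicate_succ])

/-- `0 -a→ 1 -a→ 2 -a→ 3 -a→ 4` and `2 -b→ 2`, where `a = la = true` and `b = lb = false`. -/
def coverStep : Fin 5 → Bool → Set (Fin 5)
  | 0, true => {1}
  | 1, true => {2}
  | 2, false => {2}
  | 2, true => {3}
  | 3, true => {4}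
  | _, _ => ∅

def coverNFA : NFA Bool (Fin 5) := ⟨coverStep, {0}, {4}⟩

namespace coverNFA

open NFA

@[simp] theorem step_eq : coverNFA.step = coverStep := rfl
@[simp] theorem start_eq : coverNFA.start = {0} := rfl
@[simp] theorem accept_eq : coverNFA.accept = {4} := rfl

theorem mem_acceptsFrom_four {x : List Bool} : x ∈ coverNFA.acceptsFrom {4} ↔ x = [] := by
  rcases x with _ | ⟨_ | _, x⟩ <;> simp [stepSet_singleton, coverStep]

theorem mem_acceptsFrom_three {x : List Bool} : x ∈ coverNFA.acceptsFrom {3} ↔ x = [la] := by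
  rcases x with _ | ⟨_ | _, x⟩ <;> simp [stepSet_singleton, coverStep, mem_acceptsFrom_four, la]

theorem mem_acceptsFrom_two {x : List Bool} :
    x ∈ coverNFA.acceptsFrom {2} ↔ ∃ n, x = List.replicate n lb ++ [la, la] := by
  induction x with
  | nil => simp
  | cons c x ih =>
    rw [← Nat.or_exists_add_one]
    cases c <;>
      simp [stepSet_singleton, coverStep, ih, mem_acceptsFrom_three, List.replicate_succ, la, lb]

theorem mem_accepts {x : List Bool} : x ∈ coverNFA.accepts ↔ ∃ n, x = aabkaa n := by
  rw [accepts_eq_acceptsFrom_start]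
  rcases x with _ | ⟨_ | _, _ | ⟨_ | _, x⟩⟩ <;>
    simp [stepSet_singleton, coverStep, mem_acceptsFrom_two, aabkaa, la, lb]

end coverNFA

/-- For `W = {a·a·b^k·a·a}` and forbidden pattern `a·b^k·a` (`k ≥ 1`): there is a 5-state
NFA `M` with `W ⊆ L(M)` whose extra words avoid the forbidden pattern as a factor,
whereas every NFA accepting exactly `W` needs at least `k + 5` states. -/
theorem cover_nfa_smaller_than_exact_nfa (k : ℕ) (hk : 1 ≤ k) :
    (∃ M : NFA Bool (Fin 5),
        aabkaa k ∈ M.accepts ∧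
        ∀ w ∈ M.accepts, w ≠ aabkaa k → ¬ abka k <:+: w) ∧
    (∀ (σ : Type) [Fintype σ] (N : NFA Bool σ),
        (N.accepts : Set (List Bool)) = {aabkaa k} → k + 5 ≤ Fintype.card σ) := by
  refine ⟨⟨coverNFA, coverNFA.mem_accepts.2 ⟨k, rfl⟩, fun w hw hne hinf => ?_⟩,
    fun σ _ N hN => ?_⟩
  · obtain ⟨n, rfl⟩ := coverNFA.mem_accepts.1 hw
    exact hne (by rw [eq_of_abka_infix_aabkaa hk hinf])
  · have := N.length_lt_card_of_accepts_eq_singleton hN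
    rw [length_aabkaa] at this
    omega
end

section
/- Let V₁ and V₂ be finite types and E ⊆ V₁ × V₂ a bipartite edge set. If E admits a biclique cover of size k, then there exists a nondeterministic finite automaton M over the alphabet V₁ ⊕ V₂ with a finite state type of cardinality at most k + 2 whose SSB(1)-language is exactly the set of two-letter words { [Sum.inl a, Sum.inr b] : (a, b) ∈ E }. -/
/-- `RunFrom M q w ps` means: starting in state `q`, the list of states `ps` is a run of
`M` on the word `w` ending in an accepting state. -/
def RunFrom {α σ : Type*} (M : NFA α σ) : σ → List α → List σ → Prop
  | q, [], [] => q ∈ M.accept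
  | q, a :: w, p :: ps => p ∈ M.step q a ∧ RunFrom M p w ps
  | _, _ :: _, [] => False
  | _, [], _ :: _ => False

/-- `ps` is an accepting run of `M` on the word `w`. -/
def IsAcceptingRun {α σ : Type*} (M : NFA α σ) (w : List α) (ps : List σ) : Prop :=
  ∃ p rest, ps = p :: rest ∧ p ∈ M.start ∧ RunFrom M p w rest

/-- The SSB(1)-language of `M`: words having an accepting run with pairwise
distinct states. -/
def SSB1Lang {α σ : Type*} (M : NFA α σ) : Language α :=
  {w | ∃ ps, IsAcceptingRun M w ps ∧ ps.Nodup}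

/-- A biclique cover of size `k` of a bipartite edge set `E ⊆ V₁ × V₂`. -/
def BicliqueCover {V₁ V₂ : Type*} (E : Set (V₁ × V₂)) (k : ℕ) : Prop :=
  ∃ (A : Fin k → Set V₁) (B : Fin k → Set V₂),
    (∀ r, A r ×ˢ B r ⊆ E) ∧ ∀ e ∈ E, ∃ r, e ∈ A r ×ˢ B r

/-- If a bipartite edge set `E` admits a biclique cover of size `k`, then there is an
NFA over `V₁ ⊕ V₂` with at most `k + 2` states whose SSB(1)-language is exactly
`{ [Sum.inl a, Sum.inr b] : (a, b) ∈ E }`. -/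
theorem biclique_cover_to_ssb_nfa
    {V₁ V₂ : Type*} [Fintype V₁] [Fintype V₂] (E : Set (V₁ × V₂)) (k : ℕ)
    (hcov : BicliqueCover E k) :
    ∃ s ≤ k + 2, ∃ M : NFA (V₁ ⊕ V₂) (Fin s),
      SSB1Lang M = {w | ∃ a b, (a, b) ∈ E ∧ w = [Sum.inl a, Sum.inr b]} := by
  obtain ⟨A, B, hAB, hcover⟩ := hcov
  refine ⟨k + 2, le_rfl, ?_⟩
  set M : NFA (V₁ ⊕ V₂) (Fin (k + 2)) :=
    { step := fun q x =>
        match x with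
        | Sum.inl a => {p | ∃ r : Fin k, (q : ℕ) = 0 ∧ (p : ℕ) = r + 1 ∧ a ∈ A r}
        | Sum.inr b => {p | ∃ r : Fin k, (q : ℕ) = r + 1 ∧ (p : ℕ) = k + 1 ∧ b ∈ B r}
      start := {p | (p : ℕ) = 0}
      accept := {p | (p : ℕ) = k + 1} } with hM
  refine ⟨M, ?_⟩
  ext w
  simp only [SSB1Lang, IsAcceptingRun, Set.mem_setOf_eq]
  constructor
  · rintro ⟨ps, ⟨p, rest, rfl, hp0, hrun⟩, hnd⟩
    have hp0' : (p : ℕ) = 0 := hp0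
    match w, rest, hrun with
    | [], [], hrun =>
        exact absurd (hp0'.symm.trans (hrun : (p : ℕ) = k + 1)) (by omega)
    | x :: w', q :: rest', ⟨hstep, hrun⟩ =>
        match x, hstep with
        | Sum.inl a, ⟨r, _, hq, ha⟩ =>
            match w', rest', hrun with
            | [], [], hrun =>
                have : (q : ℕ) = k + 1 := hrun
                exact absurd this (by omega)
            | y :: w'', q' :: rest'', ⟨hstep2, hrun2⟩ =>
                match y, hstep2 with
                | Sum.inl a', ⟨r', hq0, _, _⟩ => exact absurd (hq.symm.trans hq0) (by omega)
                | Sum.inr b, ⟨r', hq', hq'1, hb⟩ =>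
                    have hrr : r = r' := by
                      apply Fin.ext; omega
                    subst hrr
                    match w'', rest'', hrun2 with
                    | [], [], _ =>
                        exact ⟨a, b, hAB r ⟨ha, hb⟩, rfl⟩
                    | z :: w₃, q₃ :: rest₃, ⟨hstep3, _⟩ =>
                        match z, hstep3 with
                        | Sum.inl _, ⟨r'', h0, _, _⟩ => exact absurd (hq'1.symm.trans h0) (by omega)
                        | Sum.inr _, ⟨r'', h0, _, _⟩ =>
                            have := r''.isLt
                            omega
        | Sum.inr b, ⟨r, h0, _, _⟩ =>
            have := r.isLt
            omega
  · rintro ⟨a, b, hab, rfl⟩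
    obtain ⟨r, ha, hb⟩ := hcover _ hab
    have hr := r.isLt
    refine ⟨[⟨0, by omega⟩, ⟨r + 1, by omega⟩, ⟨k + 1, by omega⟩],
      ⟨_, _, rfl, rfl, ⟨r, rfl, rfl, ha⟩, ⟨r, rfl, rfl, hb⟩, rfl⟩, ?_⟩
    simp [List.nodup_cons, Fin.ext_iff]
    omega
end

section
/- Let V₁ and V₂ be finite types and E ⊆ V₁ × V₂ a bipartite edge set, and let k ∈ ℕ. If there exists a nondeterministic finite automaton M over the alphabet V₁ ⊕ V₂ with a finite state type of cardinality at most k + 2 whose SSB(1)-language is exactly the set of two-letter words { [Sum.inl a, Sum.inr b] : (a, b) ∈ E }, then E admits a biclique cover of size at most k. -/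
/-- If some NFA over `V₁ ⊕ V₂` with a finite state type of cardinality at most `k + 2`
has SSB(1)-language exactly `{ [Sum.inl a, Sum.inr b] : (a, b) ∈ E }`, then `E` admits a
biclique cover of size at most `k`. -/
theorem ssb_nfa_to_biclique_cover
    {V₁ V₂ : Type*} [Fintype V₁] [Fintype V₂] (E : Set (V₁ × V₂)) (k : ℕ)
    (σ : Type*) [Fintype σ] (M : NFA (V₁ ⊕ V₂) σ) (hcard : Fintype.card σ ≤ k + 2)
    (hL : SSB1Lang M = {w | ∃ a b, (a, b) ∈ E ∧ w = [Sum.inl a, Sum.inr b]}) :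
    ∃ k' ≤ k, BicliqueCover E k' := by
  classical
  -- start and accept states are disjoint
  have hdisj : ∀ r, r ∈ M.start → r ∉ M.accept := by
    intro r hs ha
    have h : ([] : List (V₁ ⊕ V₂)) ∈ SSB1Lang M :=
      ⟨[r], ⟨r, [], rfl, hs, ha⟩, by simp⟩
    rw [hL] at h
    obtain ⟨a, b, -, h⟩ := h
    simp at h
  -- unpack a run for an edge
  have hrun : ∀ a b, (a, b) ∈ E → ∃ p₀ p₁ p₂, p₀ ∈ M.start ∧
      p₁ ∈ M.step p₀ (Sum.inl a) ∧ p₂ ∈ M.step p₁ (Sum.inr b) ∧ p₂ ∈ M.accept := by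
    intro a b hab
    have h : [Sum.inl a, Sum.inr b] ∈ SSB1Lang M := by
      rw [hL]; exact ⟨a, b, hab, rfl⟩
    obtain ⟨ps, ⟨p₀, rest, hps, hst, hrf⟩, hnd⟩ := h
    match rest, hrf with
    | [], hrf => exact absurd hrf (by simp [RunFrom])
    | [p₁], hrf => exact absurd hrf (fun h => by simpa [RunFrom] using h.2)
    | p₁ :: p₂ :: p₃ :: t, hrf =>
        exact absurd hrf (fun h => by simpa [RunFrom] using h.2.2)
    | [p₁, p₂], hrf =>
        exact ⟨p₀, p₁, p₂, hst, hrf.1, hrf.2.1, hrf.2.2⟩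
  -- a state from which one can reach acceptance in one step is not a start state
  have hmid1 : ∀ p₁ b p₂, p₂ ∈ M.step p₁ (Sum.inr b) → p₂ ∈ M.accept →
      p₁ ∉ M.start := by
    intro p₁ b p₂ hstep hacc hs
    have hne : p₁ ≠ p₂ := fun h => hdisj p₂ (h ▸ hs) hacc
    have h : [Sum.inr b] ∈ SSB1Lang M :=
      ⟨[p₁, p₂], ⟨p₁, [p₂], rfl, hs, hstep, hacc⟩, by simp [hne]⟩
    rw [hL] at h
    obtain ⟨a', b', -, h⟩ := h
    simp at h
  -- a state reachable in one step from a start state is not an accept state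
  have hmid2 : ∀ p₀ a p₁, p₀ ∈ M.start → p₁ ∈ M.step p₀ (Sum.inl a) →
      p₁ ∉ M.accept := by
    intro p₀ a p₁ hs hstep hacc
    have hne : p₀ ≠ p₁ := fun h => hdisj p₀ hs (h ▸ hacc)
    have h : [Sum.inl a] ∈ SSB1Lang M :=
      ⟨[p₀, p₁], ⟨p₀, [p₁], rfl, hs, hstep, hacc⟩, by simp [hne]⟩
    rw [hL] at h
    obtain ⟨a', b', -, h⟩ := h
    simp at h
  -- forward direction: a good middle state gives edges
  have hfwd : ∀ q, q ∉ M.start → q ∉ M.accept → ∀ a b p₀ p₂,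
      p₀ ∈ M.start → q ∈ M.step p₀ (Sum.inl a) → p₂ ∈ M.step q (Sum.inr b) →
      p₂ ∈ M.accept → (a, b) ∈ E := by
    intro q hqs hqa a b p₀ p₂ hp₀ h1 h2 hp₂
    have hnd : ([p₀, q, p₂] : List σ).Nodup := by
      have e1 : p₀ ≠ q := fun h => hqs (h ▸ hp₀)
      have e2 : p₀ ≠ p₂ := fun h => hdisj p₀ hp₀ (h ▸ hp₂)
      have e3 : q ≠ p₂ := fun h => hqa (h ▸ hp₂)
      simp [e1, e2, e3]
    have h : [Sum.inl a, Sum.inr b] ∈ SSB1Lang M :=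
      ⟨[p₀, q, p₂], ⟨p₀, [q, p₂], rfl, hp₀, h1, h2, hp₂⟩, hnd⟩
    rw [hL] at h
    obtain ⟨a', b', hE', heq⟩ := h
    have : a = a' ∧ b = b' := by simpa using heq
    obtain ⟨rfl, rfl⟩ := this
    exact hE'
  rcases Set.eq_empty_or_nonempty E with hE | ⟨⟨a₀, b₀⟩, hab₀⟩
  · exact ⟨0, Nat.zero_le k, fun r => r.elim0, fun r => r.elim0,
      fun r => r.elim0, by simp [hE]⟩
  · obtain ⟨s₀, p₁₀, f₀, hs₀, -, -, hf₀⟩ := hrun a₀ b₀ hab₀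
    set S : Finset σ := Finset.univ.filter (fun q => q ∉ M.start ∧ q ∉ M.accept)
      with hS
    have hSk : S.card ≤ k := by
      have hsub : S ⊆ Finset.univ \ {s₀, f₀} := by
        intro q hq
        simp only [hS, Finset.mem_filter] at hq
        simp only [Finset.mem_sdiff, Finset.mem_univ, true_and,
          Finset.mem_insert, Finset.mem_singleton, not_or]
        exact ⟨fun h => hq.2.1 (h ▸ hs₀), fun h => hq.2.2 (h ▸ hf₀)⟩
      have hne : s₀ ≠ f₀ := fun h => hdisj s₀ hs₀ (h ▸ hf₀)
      have h2 : ({s₀, f₀} : Finset σ).card = 2 := Finset.card_pair hne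
      have := Finset.card_le_card hsub
      rw [Finset.card_sdiff_of_subset (Finset.subset_univ _), h2, Finset.card_univ] at this
      omega
    refine ⟨S.card, hSk, ?_⟩
    have hqmem : ∀ r : Fin S.card, ((S.equivFin.symm r : S) : σ) ∉ M.start ∧
        ((S.equivFin.symm r : S) : σ) ∉ M.accept := by
      intro r
      have := (S.equivFin.symm r).2
      exact (Finset.mem_filter.mp this).2
    refine ⟨fun r => {a | ∃ p₀ ∈ M.start,
        ((S.equivFin.symm r : S) : σ) ∈ M.step p₀ (Sum.inl a)},
      fun r => {b | ∃ p₂ ∈ M.accept,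
        p₂ ∈ M.step ((S.equivFin.symm r : S) : σ) (Sum.inr b)}, ?_, ?_⟩
    · rintro r ⟨a, b⟩ ⟨⟨p₀, hp₀, h1⟩, ⟨p₂, hp₂, h2⟩⟩
      exact hfwd _ (hqmem r).1 (hqmem r).2 a b p₀ p₂ hp₀ h1 h2 hp₂
    · rintro ⟨a, b⟩ hab
      obtain ⟨p₀, p₁, p₂, hp₀, h1, h2, hp₂⟩ := hrun a b hab
      have hp₁S : p₁ ∈ S := by
        simp only [hS, Finset.mem_filter, Finset.mem_univ, true_and]
        exact ⟨hmid1 p₁ b p₂ h2 hp₂, hmid2 p₀ a p₁ hp₀ h1⟩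
      refine ⟨S.equivFin ⟨p₁, hp₁S⟩, ?_, ?_⟩
      · refine ⟨p₀, hp₀, ?_⟩
        rw [Equiv.symm_apply_apply]
        exact h1
      · refine ⟨p₂, hp₂, ?_⟩
        rw [Equiv.symm_apply_apply]
        exact h2
end
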